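/- Let F be a totally real number field of degree N and let σ range over the N real embeddings F → ℝ; write Nm = N_{F/ℚ} for the field norm. Let x, x' ∈ F satisfy σ(x)·σ(x') > 0 for every σ. Then 2^{−N} · e^{2π·tr_{F/ℚ}(x x')} · ∏_σ ( 2 ∫_0^∞ e^{−π( σ(x)²/t² + σ(x')² t² )} · ( σ(x)/t + σ(x')·t ) dt/t ) = sgn( Nm(x) ). -/

import Mathlib

/-!
Completing the square, `a²/t² + b²t² = (bt - a/t)² + 2ab`, and the substitution `u = bt - a/t`,
a bijection of `(0, ∞)` onto `ℝ` with `du = (b + a/t²) dt`, turn the factor at `σ` into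
`e^{-2πab}` times the Gaussian integral `∫ e^{-πu²} du = 1`, where `a = σ(x)`, `b = σ(x')`;
for `a, b < 0` the integrand is odd in `(a, b)`, which produces `sgn a`. Since `F` is totally
real, `tr(xx') = ∑_σ σ(x)σ(x')` and `Nm(x) = ∏_σ σ(x)`, so the exponentials cancel and the signs
multiply to `sgn Nm(x)`.
-/

open MeasureTheory Set Real

theorem Real.sign_mul (x y : ℝ) : Real.sign (x * y) = Real.sign x * Real.sign y := by
  rcases lt_trichotomy x 0 with hx | rfl | hx <;> rcases lt_trichotomy y 0 with hy | rfl | hy <;>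
    simp [Real.sign_of_neg, Real.sign_of_pos, Real.sign_zero, *, mul_pos_of_neg_of_neg,
      mul_neg_of_neg_of_pos, mul_neg_of_pos_of_neg]

theorem Real.sign_prod {ι : Type*} (s : Finset ι) (f : ι → ℝ) :
    Real.sign (∏ i ∈ s, f i) = ∏ i ∈ s, Real.sign (f i) :=
  map_prod (⟨⟨Real.sign, Real.sign_one⟩, Real.sign_mul⟩ : ℝ →* ℝ) f s

theorem integral_Ioi_smul_comp_mul_sub_div {E : Type*} [NormedAddCommGroup E] [NormedSpace ℝ E]
    {a b : ℝ} (ha : 0 < a) (hb : 0 < b) (g : ℝ → E) :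
    ∫ t in Ioi 0, (b + a / t ^ 2) • g (b * t - a / t) = ∫ u, g u := by
  have hderiv : ∀ t ∈ Ioi (0 : ℝ),
      HasDerivWithinAt (fun t => b * t - a / t) (b + a / t ^ 2) (Ioi 0) t := by
    intro t ht
    have h : HasDerivAt (fun t => b * t - a * t⁻¹) (b * 1 - a * -(t ^ 2)⁻¹) t :=
      ((hasDerivAt_id' t).const_mul b).sub ((hasDerivAt_inv (ne_of_gt ht)).const_mul a)
    simpa [div_eq_mul_inv] using h.hasDerivWithinAt
  have hmono : StrictMonoOn (fun t => b * t - a / t) (Ioi 0) := by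
    intro s hs t ht hst
    have : a / t < a / s := div_lt_div_of_pos_left ha hs hst
    dsimp only
    nlinarith
  -- the inverse map solves `b t² - u t - a = 0`
  have himage : (fun t => b * t - a / t) '' Ioi 0 = univ := by
    refine eq_univ_of_forall fun u => ?_
    set s := √(u ^ 2 + 4 * a * b)
    have hs : s ^ 2 = u ^ 2 + 4 * a * b := sq_sqrt (by positivity)
    have hus : 0 < u + s := by nlinarith [sqrt_nonneg (u ^ 2 + 4 * a * b)]
    refine ⟨(u + s) / (2 * b), mem_Ioi.2 (by positivity), ?_⟩
    have : u + s ≠ 0 := ne_of_gt hus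
    field_simp
    linear_combination hs
  have h := integral_image_eq_integral_abs_deriv_smul measurableSet_Ioi hderiv hmono.injOn g
  rw [himage, setIntegral_univ] at h
  rw [h]
  refine setIntegral_congr_fun measurableSet_Ioi fun t ht => ?_
  have : 0 < b + a / t ^ 2 := by have := mem_Ioi.1 ht; positivity
  simp only [abs_of_pos this]

theorem integral_Ioi_exp_neg_pi_mul_of_pos {a b : ℝ} (ha : 0 < a) (hb : 0 < b) :
    ∫ t in Ioi 0, exp (-π * (a ^ 2 / t ^ 2 + b ^ 2 * t ^ 2)) * (a / t + b * t) / t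
      = exp (-(2 * π * (a * b))) := by
  have hintegrand : ∀ t ∈ Ioi (0 : ℝ),
      exp (-π * (a ^ 2 / t ^ 2 + b ^ 2 * t ^ 2)) * (a / t + b * t) / t
        = (b + a / t ^ 2) • (exp (-(2 * π * (a * b))) * exp (-π * (b * t - a / t) ^ 2)) := by
    intro t ht
    have ht : t ≠ 0 := ne_of_gt ht
    rw [smul_eq_mul, ← exp_add]
    field_simp
    ring_nf
  rw [setIntegral_congr_fun measurableSet_Ioi hintegrand,
    integral_Ioi_smul_comp_mul_sub_div ha hb (fun u => exp (-(2 * π * (a * b))) * exp (-π * u ^ 2)),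
    integral_const_mul, integral_gaussian, div_self pi_ne_zero, sqrt_one, mul_one]

theorem integral_Ioi_exp_neg_pi_mul_of_mul_pos {a b : ℝ} (hab : 0 < a * b) :
    ∫ t in Ioi 0, exp (-π * (a ^ 2 / t ^ 2 + b ^ 2 * t ^ 2)) * (a / t + b * t) / t
      = Real.sign a * exp (-(2 * π * (a * b))) := by
  rcases pos_and_pos_or_neg_and_neg_of_mul_pos hab with ⟨ha, hb⟩ | ⟨ha, hb⟩
  · rw [Real.sign_of_pos ha, one_mul, integral_Ioi_exp_neg_pi_mul_of_pos ha hb]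
  · have hodd : ∀ t : ℝ,
        exp (-π * ((-a) ^ 2 / t ^ 2 + (-b) ^ 2 * t ^ 2)) * (-a / t + -b * t) / t
          = -(exp (-π * (a ^ 2 / t ^ 2 + b ^ 2 * t ^ 2)) * (a / t + b * t) / t) := fun t => by
      rw [neg_sq, neg_sq]
      ring
    have h := integral_Ioi_exp_neg_pi_mul_of_pos (neg_pos.2 ha) (neg_pos.2 hb)
    rw [funext hodd, integral_neg, neg_mul_neg] at h
    rw [Real.sign_of_neg ha, neg_one_mul, ← h, neg_neg]

namespace NumberField

variable {F : Type*} [Field F] [NumberField F] {ι : Type*} [Fintype ι]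
  {σ : ι → F →+* ℝ}

theorem bijective_ofReal_comp_of_card_eq (hσ : Function.Injective σ)
    (hcard : Module.finrank ℚ F = Fintype.card ι) :
    Function.Bijective fun i => Complex.ofRealHom.comp (σ i) := by
  refine (Fintype.bijective_iff_injective_and_card _).2 ⟨fun i j hij => hσ ?_, ?_⟩
  · ext z
    exact Complex.ofReal_injective (RingHom.congr_fun hij z)
  · rw [Embeddings.card, hcard]

noncomputable def algHomEquivOfCardEq (hσ : Function.Injective σ)
    (hcard : Module.finrank ℚ F = Fintype.card ι) : ι ≃ (F →ₐ[ℚ] ℂ) :=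
  (Equiv.ofBijective _ (bijective_ofReal_comp_of_card_eq hσ hcard)).trans
    (RingHom.equivRatAlgHom F ℂ)

theorem ratCast_trace_eq_sum (hσ : Function.Injective σ)
    (hcard : Module.finrank ℚ F = Fintype.card ι) (z : F) :
    (Algebra.trace ℚ F z : ℝ) = ∑ i, σ i z := by
  apply Complex.ofReal_injective
  have h := trace_eq_sum_embeddings (K := ℚ) (L := F) ℂ (x := z)
  rw [← Fintype.sum_equiv (algHomEquivOfCardEq hσ hcard) (fun i => (σ i z : ℂ)) _
    fun _ => rfl] at h
  push_cast
  exact h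

theorem ratCast_norm_eq_prod (hσ : Function.Injective σ)
    (hcard : Module.finrank ℚ F = Fintype.card ι) (z : F) :
    (Algebra.norm ℚ z : ℝ) = ∏ i, σ i z := by
  apply Complex.ofReal_injective
  have h := Algebra.norm_eq_prod_embeddings ℚ ℂ z
  rw [← Fintype.prod_equiv (algHomEquivOfCardEq hσ hcard) (fun i => (σ i z : ℂ)) _
    fun _ => rfl] at h
  push_cast
  exact h

end NumberField

/-- The analytic identity `∫_{𝔻₀⁺} φ⁰(𝐱) = sgn Nm(x)` from the proof of
Proposition 4.12 (intertop). -/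
theorem integral_phi0_eq_sign_norm
    (F : Type*) [Field F] [NumberField F] (N : ℕ)
    (hdeg : Module.finrank ℚ F = N)
    (σ : Fin N → (F →+* ℝ)) (hσ : Function.Bijective σ)
    (x x' : F) (hpos : ∀ j, 0 < σ j x * σ j x') :
    ((2 : ℝ) ^ N)⁻¹ * Real.exp (2 * Real.pi * (Algebra.trace ℚ F (x * x') : ℝ))
      * ∏ j, (2 * ∫ t in Set.Ioi (0 : ℝ),
          Real.exp (-Real.pi * ((σ j x) ^ 2 / t ^ 2 + (σ j x') ^ 2 * t ^ 2))
            * ((σ j x) / t + (σ j x') * t) / t)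
      = Real.sign ((Algebra.norm ℚ x : ℝ)) := by
  have hcard : Module.finrank ℚ F = Fintype.card (Fin N) := by rw [hdeg, Fintype.card_fin]
  have htrace : (Algebra.trace ℚ F (x * x') : ℝ) = ∑ j, σ j x * σ j x' := by
    simp only [NumberField.ratCast_trace_eq_sum hσ.injective hcard, map_mul]
  simp only [integral_Ioi_exp_neg_pi_mul_of_mul_pos (hpos _), Finset.prod_mul_distrib,
    Finset.prod_const, Finset.card_univ, Fintype.card_fin, ← Real.exp_sum,
    NumberField.ratCast_norm_eq_prod hσ.injective hcard, Real.sign_prod, htrace,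
    Finset.mul_sum, Finset.sum_neg_distrib]
  rw [Real.exp_neg]
  field_simp
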